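/- Suppose ∑ a_n e^{-ns} converges for all s > 0 and tends to L as s → 0⁺ (Abel summability written via s = −ln x), and n·|a_n| → 0. Then ∑ a_n = L. -/

import Mathlib

open Filter Real Topology

lemma tauber_aux_one_sub_exp (x : ℝ) : 1 - Real.exp (-x) ≤ x := by
  have := Real.add_one_le_exp (-x); linarith

lemma tauber_aux_lb (N : ℕ) (hN : 1 ≤ N) :
    1 / (Real.exp 1 * N) ≤ 1 - Real.exp (-(1 / (N : ℝ))) := by
  have hN' : (1:ℝ) ≤ N := by exact_mod_cast hN
  have hNpos : (0:ℝ) < N := by linarith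
  have hx : (0:ℝ) < 1 / N := by positivity
  have hx1 : 1 / (N:ℝ) ≤ 1 := by
    rw [div_le_one hNpos]; exact hN'
  -- 1 - e^{-x} ≥ x e^{-x} ≥ x e^{-1}
  have h1 : (1/(N:ℝ)) * Real.exp (-(1/(N:ℝ))) ≤ 1 - Real.exp (-(1/(N:ℝ))) := by
    have h2 : (1/(N:ℝ)) + 1 ≤ Real.exp (1/(N:ℝ)) := Real.add_one_le_exp _
    have h3 : Real.exp (-(1/(N:ℝ))) * Real.exp (1/(N:ℝ)) = 1 := by
      rw [← Real.exp_add]; simp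
    nlinarith [Real.exp_pos (-(1/(N:ℝ)))]
  have h4 : Real.exp (-1) ≤ Real.exp (-(1/(N:ℝ))) := by
    apply Real.exp_le_exp.mpr; linarith
  have h5 : 1 / (Real.exp 1 * N) = (1/(N:ℝ)) * Real.exp (-1) := by
    rw [Real.exp_neg]; field_simp
  rw [h5]
  calc (1/(N:ℝ)) * Real.exp (-1) ≤ (1/(N:ℝ)) * Real.exp (-(1/(N:ℝ))) := by
        apply mul_le_mul_of_nonneg_left h4 (le_of_lt hx)
    _ ≤ _ := h1

/-- Tauber's theorem for Abel summability (`λ_n = n`) with condition `n·|a_n| → 0`. -/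
theorem abel_tauber
    (a : ℕ → ℝ) (g : ℝ → ℝ) (L : ℝ)
    (hconv : ∀ s : ℝ, 0 < s →
      Tendsto (fun N => ∑ n ∈ Finset.range N, a n * Real.exp (-(n : ℝ) * s))
        atTop (𝓝 (g s)))
    (hlim : Tendsto g (𝓝[>] (0 : ℝ)) (𝓝 L))
    (htauber : Tendsto (fun n : ℕ => (n : ℝ) * |a n|) atTop (𝓝 0)) :
    Tendsto (fun N => ∑ n ∈ Finset.range N, a n) atTop (𝓝 L) := by
  have hg : Tendsto (fun N : ℕ => g (1/(N:ℝ))) atTop (𝓝 L) := by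
    apply hlim.comp
    apply tendsto_nhdsWithin_of_tendsto_nhds_of_eventually_within
    · exact tendsto_one_div_atTop_nhds_zero_nat
    · filter_upwards [eventually_gt_atTop 0] with N hN
      have : (0:ℝ) < N := by exact_mod_cast hN
      exact Set.mem_Ioi.mpr (by positivity)
  have hces : Tendsto (fun N : ℕ => (N:ℝ)⁻¹ • ∑ n ∈ Finset.range N, (n:ℝ) * |a n|)
      atTop (𝓝 0) := htauber.cesaro
  have key : Tendsto (fun N : ℕ => (∑ n ∈ Finset.range N, a n) - g (1/(N:ℝ)))
      atTop (𝓝 0) := by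
    rw [NormedAddCommGroup.tendsto_nhds_zero]
    intro ε hε
    set δ : ℝ := ε / (2 * (Real.exp 1 + 1)) with hδdef
    have hepos : (0:ℝ) < Real.exp 1 + 1 := by positivity
    have hδ : 0 < δ := by positivity
    have h1 : ∀ᶠ n : ℕ in atTop, (n:ℝ) * |a n| ≤ δ := by
      have := htauber.eventually (eventually_le_nhds hδ)
      filter_upwards [this] with n hn using hn
    have h2 : ∀ᶠ N : ℕ in atTop, (N:ℝ)⁻¹ • ∑ n ∈ Finset.range N, (n:ℝ) * |a n| ≤ δ := by
      have := hces.eventually (eventually_le_nhds hδ)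
      filter_upwards [this] with n hn using hn
    obtain ⟨N₁, hN₁⟩ := h1.exists_forall_of_atTop
    obtain ⟨N₂, hN₂⟩ := h2.exists_forall_of_atTop
    filter_upwards [eventually_ge_atTop (max (max N₁ N₂) 1)] with N hN
    have hNN₁ : N₁ ≤ N := le_trans (le_trans (le_max_left _ _) (le_max_left _ _)) hN
    have hNN₂ : N₂ ≤ N := le_trans (le_trans (le_max_right _ _) (le_max_left _ _)) hN
    have hN1 : 1 ≤ N := le_trans (le_max_right _ _) hN
    have hN' : (1:ℝ) ≤ N := by exact_mod_cast hN1
    have hNpos : (0:ℝ) < N := by linarith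
    set s : ℝ := 1 / N with hsdef
    have hs : 0 < s := by positivity
    set r : ℝ := Real.exp (-s) with hrdef
    have hr0 : 0 < r := Real.exp_pos _
    have hr1 : r < 1 := by
      rw [hrdef, Real.exp_lt_one_iff]; linarith
    set P : ℕ → ℝ := fun M => ∑ n ∈ Finset.range M, a n * Real.exp (-(n:ℝ) * s) with hPdef
    -- Bound 1: |S N - P N| ≤ δ
    have bound1 : |(∑ n ∈ Finset.range N, a n) - P N| ≤ δ := by
      have : (∑ n ∈ Finset.range N, a n) - P N
          = ∑ n ∈ Finset.range N, a n * (1 - Real.exp (-(n:ℝ) * s)) := by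
        rw [← Finset.sum_sub_distrib]; congr 1; ext n; ring
      rw [this]
      calc |∑ n ∈ Finset.range N, a n * (1 - Real.exp (-(n:ℝ) * s))|
          ≤ ∑ n ∈ Finset.range N, |a n * (1 - Real.exp (-(n:ℝ) * s))| :=
            Finset.abs_sum_le_sum_abs _ _
        _ ≤ ∑ n ∈ Finset.range N, ((n:ℝ) * |a n|) * s := by
            apply Finset.sum_le_sum
            intro n _
            rw [abs_mul]
            have he1 : Real.exp (-(n:ℝ) * s) ≤ 1 := by
              apply Real.exp_le_one_iff.mpr
              have : (0:ℝ) ≤ (n:ℝ) * s := by positivity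
              linarith
            have habs : |1 - Real.exp (-(n:ℝ) * s)| = 1 - Real.exp (-(n:ℝ) * s) := by
              rw [abs_of_nonneg]; linarith
            rw [habs]
            have h6 : 1 - Real.exp (-(n:ℝ) * s) ≤ (n:ℝ) * s := by
              rw [neg_mul]; exact tauber_aux_one_sub_exp _
            calc |a n| * (1 - Real.exp (-(n:ℝ) * s)) ≤ |a n| * ((n:ℝ) * s) := by
                  apply mul_le_mul_of_nonneg_left h6 (abs_nonneg _)
              _ = ((n:ℝ) * |a n|) * s := by ring
        _ = ((N:ℝ)⁻¹ • ∑ n ∈ Finset.range N, (n:ℝ) * |a n|) := by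
            rw [← Finset.sum_mul, smul_eq_mul, hsdef]
            field_simp
        _ ≤ δ := hN₂ N hNN₂
    -- Bound 2: |P N - g s| ≤ δ * e
    have bound2 : |g s - P N| ≤ δ * Real.exp 1 := by
      have htend : Tendsto (fun M => |P M - P N|) atTop (𝓝 |g s - P N|) :=
        ((hconv s hs).sub tendsto_const_nhds).abs
      apply le_of_tendsto htend
      filter_upwards [eventually_ge_atTop N] with M hM
      have hsplit : P M - P N = ∑ n ∈ Finset.Ico N M, a n * Real.exp (-(n:ℝ) * s) := by
        rw [hPdef]
        simp only
        rw [Finset.sum_Ico_eq_sub _ hM]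
      rw [hsplit]
      have hsummable : Summable (fun n : ℕ => r ^ n) :=
        summable_geometric_of_lt_one (le_of_lt hr0) hr1
      have hgeom : ∑ n ∈ Finset.Ico N M, r ^ n ≤ (1 - r)⁻¹ := by
        calc ∑ n ∈ Finset.Ico N M, r ^ n ≤ ∑' n : ℕ, r ^ n := by
              apply Summable.sum_le_tsum _ _ hsummable
              intro n _; positivity
          _ = (1 - r)⁻¹ := tsum_geometric_of_lt_one (le_of_lt hr0) hr1
      calc |∑ n ∈ Finset.Ico N M, a n * Real.exp (-(n:ℝ) * s)|
          ≤ ∑ n ∈ Finset.Ico N M, |a n * Real.exp (-(n:ℝ) * s)| :=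
            Finset.abs_sum_le_sum_abs _ _
        _ ≤ ∑ n ∈ Finset.Ico N M, (δ / N) * r ^ n := by
            apply Finset.sum_le_sum
            intro n hn
            have hnN : N ≤ n := (Finset.mem_Ico.mp hn).1
            have hnN' : (N:ℝ) ≤ n := by exact_mod_cast hnN
            have hnpos : (0:ℝ) < n := lt_of_lt_of_le hNpos hnN'
            have hexp : Real.exp (-(n:ℝ) * s) = r ^ n := by
              rw [hrdef, ← Real.exp_nat_mul]; ring_nf
            rw [abs_mul, hexp, abs_of_pos (pow_pos hr0 n)]
            apply mul_le_mul_of_nonneg_right _ (le_of_lt (pow_pos hr0 n))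
            have han : (n:ℝ) * |a n| ≤ δ := hN₁ n (le_trans hNN₁ hnN)
            rw [le_div_iff₀ hNpos]
            calc |a n| * N ≤ |a n| * n :=
                  mul_le_mul_of_nonneg_left hnN' (abs_nonneg _)
              _ = (n:ℝ) * |a n| := by ring
              _ ≤ δ := han
        _ = (δ / N) * ∑ n ∈ Finset.Ico N M, r ^ n := by rw [Finset.mul_sum]
        _ ≤ (δ / N) * (1 - r)⁻¹ := by
            apply mul_le_mul_of_nonneg_left hgeom (by positivity)
        _ ≤ δ * Real.exp 1 := by
            have hlb := tauber_aux_lb N hN1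
            have h1r : 0 < 1 - r := by linarith
            have hinv : 1 / (1 - r) ≤ Real.exp 1 * N :=
              (one_div_le h1r (by positivity)).mpr hlb
            rw [one_div] at hinv
            rw [div_mul_eq_mul_div, div_le_iff₀ hNpos]
            calc δ * (1 - r)⁻¹ ≤ δ * (Real.exp 1 * N) :=
                  mul_le_mul_of_nonneg_left hinv (le_of_lt hδ)
              _ = δ * Real.exp 1 * N := by ring
    -- Combine
    have hcomb : |(∑ n ∈ Finset.range N, a n) - g s| ≤ δ + δ * Real.exp 1 := by
      calc |(∑ n ∈ Finset.range N, a n) - g s|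
          = |((∑ n ∈ Finset.range N, a n) - P N) + (P N - g s)| := by ring_nf
        _ ≤ |(∑ n ∈ Finset.range N, a n) - P N| + |P N - g s| := abs_add_le _ _
        _ ≤ δ + δ * Real.exp 1 := by
            rw [abs_sub_comm (P N) (g s)]
            exact add_le_add bound1 bound2
    have hlt : δ + δ * Real.exp 1 < ε := by
      have h : δ * (1 + Real.exp 1) < ε := by
        rw [hδdef, div_mul_eq_mul_div, div_lt_iff₀ (by positivity)]
        nlinarith [Real.exp_pos 1]
      calc δ + δ * Real.exp 1 = δ * (1 + Real.exp 1) := by ring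
        _ < ε := h
    rw [Real.norm_eq_abs]
    exact lt_of_le_of_lt hcomb hlt
  simpa using key.add hg
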